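/- Let λ > 0 and α > 1, let (E_k)_{k≥1} be i.i.d. exponential random variables with rate λ, put τ_k = E_1 + ⋯ + E_k, and let (ξ_k)_{k≥1} be i.i.d. ℝ^d-valued random variables independent of (E_k). Then the series Σ_{k=1}^∞ τ_k^{−α} ξ_k converges almost surely if and only if E[‖ξ₁‖^{1/α}] < ∞. (Example 2 of Section 4.) -/

import Mathlib

/-!
By the strong law of large numbers `τ_k / (k + 1) → 1 / λ` almost surely, so `τ_k ^ (-α)` is
comparable to `(k + 1) ^ (-α)`. If `E ‖ξ‖ ^ (1/α) < ∞`, then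
`E ∑ min 1 ((k + 1) ^ (-α) ‖ξ_k‖) ≤ 1 + α / (α - 1) · E ‖ξ‖ ^ (1/α)`: the terms with
`k + 1 ≤ ‖ξ‖ ^ (1/α)` contribute at most `1` each and the others form the tail of a `p`-series.
Hence the truncated series converges a.s., its terms tend to zero, so it eventually coincides with
`∑ (k + 1) ^ (-α) ‖ξ_k‖`, and the series converges absolutely. Conversely, convergence forces
`(k + 1) ^ (-α) ‖ξ_k‖ → 0`, so a.s. only finitely many of the independent events
`(k + 1) ^ α ≤ ‖ξ_k‖` occur; by the second Borel–Cantelli lemma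
`∑ P (k + 1 ≤ ‖ξ‖ ^ (1/α)) < ∞`, and this sum bounds `E ‖ξ‖ ^ (1/α)` up to `1`.
-/

open MeasureTheory Filter Set ProbabilityTheory

/-- The type family for the combined family of arrival increments (`ℝ`-valued, index
`Sum.inl k`) and jumps (`ℝ^d`-valued, index `Sum.inr k`). -/
abbrev jointType (d : ℕ) : ℕ ⊕ ℕ → Type
  | .inl _ => ℝ
  | .inr _ => EuclideanSpace ℝ (Fin d)

/-- The measurable space structures on the combined family. -/
def jointMS (d : ℕ) : (i : ℕ ⊕ ℕ) → MeasurableSpace (jointType d i)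
  | .inl _ => inferInstance
  | .inr _ => inferInstance

/-- The combined family of random variables: the increments `E k` and the jumps `ξ k`. -/
def jointFam {Ω : Type*} {d : ℕ} (E : ℕ → Ω → ℝ)
    (ξ : ℕ → Ω → EuclideanSpace ℝ (Fin d)) : (i : ℕ ⊕ ℕ) → Ω → jointType d i
  | .inl k => E k
  | .inr k => ξ k

open Asymptotics Topology
open scoped ENNReal

lemma mul_add_one_rpow_neg_le_rpow_sub_rpow {α x : ℝ} (hα : 1 ≤ α) (hx : 0 < x) :
    (α - 1) * (x + 1) ^ (-α) ≤ x ^ (1 - α) - (x + 1) ^ (1 - α) := by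
  obtain ⟨c, ⟨hxc, hc⟩, hslope⟩ := exists_hasDerivAt_eq_slope (fun y => y ^ (1 - α))
    (fun y => (1 - α) * y ^ (-α)) (lt_add_one x)
    (continuousOn_id.rpow_const fun y hy => Or.inl (hx.trans_le hy.1).ne')
    fun y hy => by
      simpa [sub_sub_cancel_left] using Real.hasDerivAt_rpow_const (p := 1 - α)
        (Or.inl (hx.trans hy.1).ne')
  have hmono : (x + 1) ^ (-α) ≤ c ^ (-α) :=
    Real.rpow_le_rpow_of_nonpos (hx.trans hxc) hc.le (by linarith)
  rw [add_sub_cancel_left, div_one] at hslope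
  linarith [mul_le_mul_of_nonneg_left hmono (sub_nonneg.2 hα)]

lemma sum_range_add_nat_add_one_rpow_neg_le {α y : ℝ} (hα : 1 < α) (hy : 0 < y) (n : ℕ) :
    ∑ k ∈ Finset.range n, (y + k + 1) ^ (-α) ≤ y ^ (1 - α) / (α - 1) := by
  set g : ℕ → ℝ := fun k => (y + k) ^ (1 - α)
  have hstep : ∀ k : ℕ, (α - 1) * (y + k + 1) ^ (-α) ≤ g k - g (k + 1) := fun k => by
    simpa [g, add_assoc] using
      mul_add_one_rpow_neg_le_rpow_sub_rpow hα.le (by positivity : 0 < y + k)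
  rw [le_div_iff₀ (sub_pos.2 hα), mul_comm, Finset.mul_sum]
  calc ∑ k ∈ Finset.range n, (α - 1) * (y + k + 1) ^ (-α)
      ≤ ∑ k ∈ Finset.range n, (g k - g (k + 1)) := Finset.sum_le_sum fun k _ => hstep k
    _ = g 0 - g n := Finset.sum_range_sub' g n
    _ ≤ y ^ (1 - α) := by
      simp only [g, Nat.cast_zero, add_zero, sub_le_self_iff]
      positivity

lemma sum_range_min_one_rpow_neg_mul_le {α x : ℝ} (hα : 1 < α) (hx : 0 ≤ x) (n : ℕ) :
    ∑ k ∈ Finset.range n, min 1 (((k : ℝ) + 1) ^ (-α) * x) ≤ 1 + α / (α - 1) * x ^ (1 / α) := by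
  have hα' : 0 < α - 1 := sub_pos.2 hα
  set f : ℕ → ℝ := fun k => min 1 (((k : ℝ) + 1) ^ (-α) * x)
  have hf : ∀ k, 0 ≤ f k := fun k => le_min zero_le_one (by positivity)
  rcases hx.eq_or_lt with rfl | hx
  · simp only [f, mul_zero, min_eq_right zero_le_one, Finset.sum_const_zero]
    positivity
  set y := x ^ (1 / α)
  have hy : 0 < y := by positivity
  have hxy : x = y ^ α := by
    rw [← Real.rpow_mul hx.le, one_div_mul_cancel (by linarith), Real.rpow_one]
  set N := ⌈y⌉₊
  have head : ∑ k ∈ Finset.range N, f k ≤ y + 1 := by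
    calc ∑ k ∈ Finset.range N, f k ≤ ∑ _k ∈ Finset.range N, (1 : ℝ) :=
          Finset.sum_le_sum fun k _ => min_le_left _ _
      _ ≤ y + 1 := by simpa using (Nat.ceil_lt_add_one hy.le).le
  have tail : ∀ j : ℕ, f (N + j) ≤ (y + j + 1) ^ (-α) * x := fun j => by
    refine (min_le_right _ _).trans (mul_le_mul_of_nonneg_right ?_ hx.le)
    refine Real.rpow_le_rpow_of_nonpos (by positivity) ?_ (by linarith)
    push_cast
    linarith [Nat.le_ceil y]
  calc ∑ k ∈ Finset.range n, f k ≤ ∑ k ∈ Finset.range (N + n), f k :=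
        Finset.sum_le_sum_of_subset_of_nonneg (Finset.range_mono (Nat.le_add_left n N))
          fun k _ _ => hf k
    _ = ∑ k ∈ Finset.range N, f k + ∑ j ∈ Finset.range n, f (N + j) := Finset.sum_range_add f N n
    _ ≤ (y + 1) + y ^ (1 - α) / (α - 1) * x := by
      refine add_le_add head ((Finset.sum_le_sum fun j _ => tail j).trans ?_)
      rw [← Finset.sum_mul]
      exact mul_le_mul_of_nonneg_right (sum_range_add_nat_add_one_rpow_neg_le hα hy n) hx.le
    _ = 1 + α / (α - 1) * y := by
      rw [hxy, div_mul_eq_mul_div, ← Real.rpow_add hy, sub_add_cancel, Real.rpow_one]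
      field_simp
      ring

lemma one_le_rpow_neg_mul_iff {α t x : ℝ} (hα : 0 < α) (ht : 0 < t) (hx : 0 ≤ x) :
    1 ≤ t ^ (-α) * x ↔ t ≤ x ^ (1 / α) := by
  rw [Real.rpow_neg ht.le, ← div_eq_inv_mul, one_le_div (by positivity), one_div,
    Real.le_rpow_inv_iff_of_pos ht.le hx hα]

lemma tsum_ite_add_one_le_eq_floor (x : ℝ) :
    ∑' k : ℕ, (if (k : ℝ) + 1 ≤ x then 1 else 0 : ℝ≥0∞) = ⌊x⌋₊ := by
  have hmem : ∀ k : ℕ, (k : ℝ) + 1 ≤ x ↔ k ∈ Finset.range ⌊x⌋₊ := fun k => by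
    rw [Finset.mem_range, Nat.lt_iff_add_one_le, Nat.le_floor_iff' k.succ_ne_zero, Nat.cast_succ]
  simp_rw [hmem]
  rw [tsum_eq_sum (s := Finset.range ⌊x⌋₊) fun k hk => if_neg hk, Finset.sum_ite_mem]
  simp

lemma lintegral_ofReal_le_measure_univ_add_tsum {β : Type*} [MeasurableSpace β] (μ : Measure β)
    {g : β → ℝ} (hg : Measurable g) :
    ∫⁻ a, ENNReal.ofReal (g a) ∂μ ≤ μ univ + ∑' k : ℕ, μ {a | (k : ℝ) + 1 ≤ g a} := by
  have hpt : ∀ x : ℝ, ENNReal.ofReal x ≤ 1 + ⌊x⌋₊ := fun x => by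
    rw [add_comm, ← ENNReal.ofReal_natCast, ← ENNReal.ofReal_one,
      ← ENNReal.ofReal_add (Nat.cast_nonneg _) zero_le_one]
    exact ENNReal.ofReal_le_ofReal (Nat.lt_floor_add_one x).le
  have hsets : ∀ k : ℕ, MeasurableSet {a | (k : ℝ) + 1 ≤ g a} := fun k =>
    measurableSet_le measurable_const hg
  calc ∫⁻ a, ENNReal.ofReal (g a) ∂μ ≤ ∫⁻ a, (1 + (⌊g a⌋₊ : ℝ≥0∞)) ∂μ :=
        lintegral_mono fun a => hpt _
    _ = μ univ + ∫⁻ a, ∑' k : ℕ, {a | (k : ℝ) + 1 ≤ g a}.indicator 1 a ∂μ := by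
      simp only [lintegral_add_left measurable_const, lintegral_const, one_mul, indicator_apply,
        mem_ofPred_eq, Pi.one_apply, tsum_ite_add_one_le_eq_floor]
    _ = μ univ + ∑' k : ℕ, μ {a | (k : ℝ) + 1 ≤ g a} := by
      rw [lintegral_tsum fun k => (measurable_one.indicator (hsets k)).aemeasurable]
      simp only [lintegral_indicator_one (hsets _)]

section Exponential

variable {r : ℝ}

lemma expMeasure_Ioi (hr : 0 < r) {x : ℝ} (hx : 0 ≤ x) :
    expMeasure r (Ioi x) = ENNReal.ofReal (Real.exp (-(r * x))) := by
  have := isProbabilityMeasure_expMeasure hr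
  have hexp : Real.exp (-(r * x)) ≤ 1 := Real.exp_le_one_iff.2 (by nlinarith)
  rw [← compl_Iic, prob_compl_eq_one_sub measurableSet_Iic, ← ofReal_cdf, cdf_expMeasure_eq hr,
    if_pos hx, ENNReal.ofReal_sub _ (Real.exp_pos _).le, ENNReal.ofReal_one,
    ENNReal.sub_sub_cancel ENNReal.one_ne_top (ENNReal.ofReal_le_one.2 hexp)]

lemma ae_pos_expMeasure (hr : 0 < r) : ∀ᵐ x ∂expMeasure r, 0 < x := by
  have := isProbabilityMeasure_expMeasure hr
  rw [ae_iff_measure_eq measurableSet_Ioi.nullMeasurableSet]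
  exact (expMeasure_Ioi hr le_rfl).trans (by simp)

lemma integrable_id_expMeasure (hr : 0 < r) : Integrable (fun x => x) (expMeasure r) := by
  have := isProbabilityMeasure_expMeasure hr
  refine ⟨aestronglyMeasurable_id,
    (hasFiniteIntegral_iff_ofReal ((ae_pos_expMeasure hr).mono fun x hx => hx.le)).2 ?_⟩
  have htail : ∀ k : ℕ, expMeasure r {x | (k : ℝ) + 1 ≤ x} ≤ ENNReal.ofReal (Real.exp (-r)) ^ k :=
    fun k => by
      rw [← ENNReal.ofReal_pow (Real.exp_pos _).le, ← Real.exp_nat_mul, mul_neg, mul_comm,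
        ← expMeasure_Ioi hr k.cast_nonneg]
      exact measure_mono fun x (hx : (k : ℝ) + 1 ≤ x) => (lt_add_one (k : ℝ)).trans_le hx
  calc ∫⁻ x, ENNReal.ofReal x ∂expMeasure r
      ≤ 1 + ∑' k : ℕ, expMeasure r {x | (k : ℝ) + 1 ≤ x} := by
        simpa using lintegral_ofReal_le_measure_univ_add_tsum (expMeasure r) measurable_id
    _ ≤ 1 + ∑' k : ℕ, ENNReal.ofReal (Real.exp (-r)) ^ k := by gcongr with k; exact htail k
    _ < ⊤ := ENNReal.add_lt_top.2 ⟨ENNReal.one_lt_top, tsum_geometric_lt_top.2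
      (ENNReal.ofReal_lt_one.2 (Real.exp_lt_one_iff.2 (neg_lt_zero.2 hr)))⟩

lemma integral_id_expMeasure_pos (hr : 0 < r) : 0 < ∫ x, x ∂expMeasure r := by
  have := isProbabilityMeasure_expMeasure hr
  rw [integral_pos_iff_support_of_nonneg_ae ((ae_pos_expMeasure hr).mono fun x hx => hx.le)
    (integrable_id_expMeasure hr)]
  calc (0 : ℝ≥0∞) < expMeasure r (Ioi 0) := by simp [expMeasure_Ioi hr le_rfl]
    _ ≤ expMeasure r (Function.support fun x => x) := measure_mono fun x hx => (ne_of_gt hx)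

end Exponential

lemma ae_tendsto_sum_range_succ_div_of_map_eq_expMeasure {Ω : Type*} [MeasurableSpace Ω]
    {P : Measure Ω} {lam : ℝ} (hlam : 0 < lam) {E : ℕ → Ω → ℝ} (hEm : ∀ k, Measurable (E k))
    (hindep : Pairwise fun i j => IndepFun (E i) (E j) P)
    (hE : ∀ k, Measure.map (E k) P = expMeasure lam) :
    ∀ᵐ ω ∂P, Tendsto (fun k : ℕ => (∑ i ∈ Finset.range (k + 1), E i ω) / ((k : ℝ) + 1)) atTop
      (𝓝 (∫ x, x ∂expMeasure lam)) := by
  have hident : ∀ k, IdentDistrib (E k) (E 0) P P := fun k =>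
    ⟨(hEm k).aemeasurable, (hEm 0).aemeasurable, by rw [hE, hE]⟩
  have hint : Integrable (E 0) P :=
    (integrable_map_measure aestronglyMeasurable_id (hEm 0).aemeasurable).1
      (by rw [hE 0]; exact integrable_id_expMeasure hlam)
  have hmean : P[E 0] = ∫ x, x ∂expMeasure lam := by
    rw [← hE 0, integral_map (f := fun x => x) (hEm 0).aemeasurable aestronglyMeasurable_id]
  filter_upwards [strong_law_ae_real E hint hindep hident] with ω hω
  simpa [Function.comp_def, hmean] using hω.comp (tendsto_add_atTop_nat 1)

lemma tendsto_zero_of_tendsto_sum_range {G : Type*} [AddCommGroup G] [TopologicalSpace G]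
    [IsTopologicalAddGroup G] {f : ℕ → G} {l : G}
    (h : Tendsto (fun n => ∑ i ∈ Finset.range n, f i) atTop (𝓝 l)) : Tendsto f atTop (𝓝 0) := by
  simpa [Finset.sum_range_succ] using (h.comp (tendsto_add_atTop_nat 1)).sub h

lemma summable_of_summable_min_one {a : ℕ → ℝ} (h : Summable fun k => min 1 (a k)) :
    Summable a := by
  refine h.congr_atTop ?_
  filter_upwards [h.tendsto_atTop_zero.eventually (gt_mem_nhds one_pos)] with k hk
  exact min_eq_right ((min_lt_iff.1 hk).resolve_left (lt_irrefl 1)).le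

section LinearGrowth

variable {V : Type*} [NormedAddCommGroup V] [NormedSpace ℝ V] {τ : ℕ → ℝ} {v : ℕ → V} {m : ℝ}

lemma isTheta_add_one_rpow_neg_of_tendsto_div
    (hτ : Tendsto (fun k : ℕ => τ k / ((k : ℝ) + 1)) atTop (𝓝 m)) (hm : 0 < m) (α : ℝ) :
    (fun k : ℕ => ((k : ℝ) + 1) ^ (-α)) =Θ[atTop] fun k => τ k ^ (-α) := by
  refine isTheta_of_div_tendsto_nhds_ne_zero (c := m ^ (-α))
    ((hτ.rpow_const (p := -α) (Or.inl hm.ne')).congr' ?_)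
    (Real.rpow_pos_of_pos hm _).ne'
  filter_upwards [hτ.eventually (lt_mem_nhds hm)] with k hk
  have hτk : 0 ≤ τ k := ((div_pos_iff_of_pos_right (by positivity)).1 hk).le
  exact Real.div_rpow hτk (by positivity) _

lemma summable_rpow_neg_smul_of_tendsto_div [CompleteSpace V] {α : ℝ}
    (hτ : Tendsto (fun k : ℕ => τ k / ((k : ℝ) + 1)) atTop (𝓝 m)) (hm : 0 < m)
    (hv : Summable fun k : ℕ => ((k : ℝ) + 1) ^ (-α) * ‖v k‖) :
    Summable fun k => τ k ^ (-α) • v k :=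
  summable_of_isBigO_nat hv <| (isTheta_add_one_rpow_neg_of_tendsto_div hτ hm α).symm.isBigO.smul
    (isBigO_norm_right.2 (isBigO_refl _ _))

lemma tendsto_rpow_neg_mul_norm_of_tendsto_sum {α : ℝ} {l : V}
    (hτ : Tendsto (fun k : ℕ => τ k / ((k : ℝ) + 1)) atTop (𝓝 m)) (hm : 0 < m)
    (h : Tendsto (fun n => ∑ k ∈ Finset.range n, τ k ^ (-α) • v k) atTop (𝓝 l)) :
    Tendsto (fun k : ℕ => ((k : ℝ) + 1) ^ (-α) * ‖v k‖) atTop (𝓝 0) :=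
  ((isTheta_add_one_rpow_neg_of_tendsto_div hτ hm α).isBigO.smul
    (isBigO_norm_left.2 (isBigO_refl _ _))).trans_tendsto (tendsto_zero_of_tendsto_sum_range h)

end LinearGrowth

section Moments

variable {Ω V : Type*} [MeasurableSpace Ω] {P : Measure Ω} [NormedAddCommGroup V]
  [MeasurableSpace V] [OpensMeasurableSpace V] {ξ : ℕ → Ω → V} {α : ℝ}

lemma ae_summable_rpow_neg_mul_norm [IsFiniteMeasure P] (hα : 1 < α)
    (hξm : ∀ k, Measurable (ξ k)) (hξ : ∀ k, IdentDistrib (ξ k) (ξ 0) P P)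
    (hmom : ∫⁻ ω, ENNReal.ofReal (‖ξ 0 ω‖ ^ (1 / α)) ∂P < ⊤) :
    ∀ᵐ ω ∂P, Summable fun k : ℕ => ((k : ℝ) + 1) ^ (-α) * ‖ξ k ω‖ := by
  set t : ℕ → V → ℝ≥0∞ := fun k v => ENNReal.ofReal (min 1 (((k : ℝ) + 1) ^ (-α) * ‖v‖))
  have ht : ∀ k, Measurable (t k) := fun k => by fun_prop
  have hC : 0 ≤ α / (α - 1) := div_nonneg (by linarith) (by linarith)
  have hbound : ∀ v,
      ∑' k, t k v ≤ 1 + ENNReal.ofReal (α / (α - 1)) * ENNReal.ofReal (‖v‖ ^ (1 / α)) := fun v =>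
    ENNReal.tsum_le_of_sum_range_le fun n => by
      rw [← ENNReal.ofReal_sum_of_nonneg fun k _ => le_min zero_le_one (by positivity),
        ← ENNReal.ofReal_mul hC, ← ENNReal.ofReal_one,
        ← ENNReal.ofReal_add zero_le_one (mul_nonneg hC (by positivity))]
      exact ENNReal.ofReal_le_ofReal (sum_range_min_one_rpow_neg_mul_le hα (norm_nonneg v) n)
  have hfin : ∫⁻ ω, ∑' k, t k (ξ k ω) ∂P < ⊤ := by
    calc ∫⁻ ω, ∑' k, t k (ξ k ω) ∂P = ∑' k, ∫⁻ ω, t k (ξ k ω) ∂P :=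
          lintegral_tsum fun k => ((ht k).comp (hξm k)).aemeasurable
      _ = ∑' k, ∫⁻ ω, t k (ξ 0 ω) ∂P := tsum_congr fun k => ((hξ k).comp (ht k)).lintegral_eq
      _ = ∫⁻ ω, ∑' k, t k (ξ 0 ω) ∂P :=
          (lintegral_tsum fun k => ((ht k).comp (hξm 0)).aemeasurable).symm
      _ ≤ ∫⁻ ω, (1 + ENNReal.ofReal (α / (α - 1)) * ENNReal.ofReal (‖ξ 0 ω‖ ^ (1 / α))) ∂P :=
          lintegral_mono fun ω => hbound _
      _ < ⊤ := by
          rw [lintegral_add_left measurable_const, lintegral_const_mul' _ _ ENNReal.ofReal_ne_top]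
          exact ENNReal.add_lt_top.2 ⟨by simp, ENNReal.mul_lt_top ENNReal.ofReal_lt_top hmom⟩
  filter_upwards [ae_lt_top' (by fun_prop) hfin.ne] with ω hω
  exact summable_of_summable_min_one <| (ENNReal.summable_toReal hω.ne).congr fun k =>
    ENNReal.toReal_ofReal (le_min zero_le_one (by positivity))

lemma lintegral_rpow_norm_lt_top_of_ae_tendsto [IsProbabilityMeasure P] (hα : 0 < α)
    (hξm : ∀ k, Measurable (ξ k)) (hindep : iIndepFun ξ P) (hξ : ∀ k, IdentDistrib (ξ k) (ξ 0) P P)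
    (h : ∀ᵐ ω ∂P, Tendsto (fun k : ℕ => ((k : ℝ) + 1) ^ (-α) * ‖ξ k ω‖) atTop (𝓝 0)) :
    ∫⁻ ω, ENNReal.ofReal (‖ξ 0 ω‖ ^ (1 / α)) ∂P < ⊤ := by
  set B : ℕ → Set V := fun k => {v | 1 ≤ ((k : ℝ) + 1) ^ (-α) * ‖v‖}
  have hB : ∀ k, MeasurableSet (B k) := fun k => measurableSet_le measurable_const (by fun_prop)
  have hBg : ∀ k, P (ξ k ⁻¹' B k) = P {ω | (k : ℝ) + 1 ≤ ‖ξ 0 ω‖ ^ (1 / α)} := fun k => by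
    rw [(hξ k).measure_mem_eq (hB k)]
    congr 1
    ext ω
    exact one_le_rpow_neg_mul_iff hα (by positivity) (norm_nonneg _)
  have hindepB : iIndepSet (fun k => ξ k ⁻¹' B k) P :=
    (iIndepSet_iff_meas_biInter fun k => hξm k (hB k)).2 fun s =>
      hindep.measure_inter_preimage_eq_mul s fun k _ => hB k
  -- second Borel–Cantelli lemma: a divergent series would put infinitely many `ξ k` in `B k`
  have hsum : ∑' k, P (ξ k ⁻¹' B k) ≠ ⊤ := fun htop => by
    have hlimsup : P (limsup (fun k => ξ k ⁻¹' B k) atTop) = 0 := by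
      refine measure_eq_zero_iff_ae_notMem.2 ?_
      filter_upwards [h] with ω hω
      rw [mem_limsup_iff_frequently_mem, not_frequently]
      filter_upwards [hω.eventually (gt_mem_nhds one_pos)] with k hk using not_le.2 hk
    simp [measure_limsup_eq_one (fun k => hξm k (hB k)) hindepB htop] at hlimsup
  calc ∫⁻ ω, ENNReal.ofReal (‖ξ 0 ω‖ ^ (1 / α)) ∂P
      ≤ P univ + ∑' k : ℕ, P {ω | (k : ℝ) + 1 ≤ ‖ξ 0 ω‖ ^ (1 / α)} :=
        lintegral_ofReal_le_measure_univ_add_tsum P (by fun_prop)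
    _ < ⊤ := by
        rw [measure_univ, ← tsum_congr hBg]
        exact ENNReal.add_lt_top.2 ⟨ENNReal.one_lt_top, hsum.lt_top⟩

end Moments

theorem ae_exists_tendsto_sum_rpow_neg_smul_iff {Ω V : Type*} [MeasurableSpace Ω] {P : Measure Ω}
    [IsProbabilityMeasure P] [NormedAddCommGroup V] [NormedSpace ℝ V] [CompleteSpace V]
    [MeasurableSpace V] [OpensMeasurableSpace V] {ξ : ℕ → Ω → V} {τ : ℕ → Ω → ℝ} {α m : ℝ}
    (hα : 1 < α) (hm : 0 < m) (hξm : ∀ k, Measurable (ξ k)) (hindep : iIndepFun ξ P)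
    (hξ : ∀ k, IdentDistrib (ξ k) (ξ 0) P P)
    (hτ : ∀ᵐ ω ∂P, Tendsto (fun k : ℕ => τ k ω / ((k : ℝ) + 1)) atTop (𝓝 m)) :
    (∀ᵐ ω ∂P, ∃ l, Tendsto (fun n => ∑ k ∈ Finset.range n, τ k ω ^ (-α) • ξ k ω) atTop (𝓝 l)) ↔
      ∫⁻ ω, ENNReal.ofReal (‖ξ 0 ω‖ ^ (1 / α)) ∂P < ⊤ := by
  constructor
  · intro hconv
    refine lintegral_rpow_norm_lt_top_of_ae_tendsto (by linarith) hξm hindep hξ ?_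
    filter_upwards [hconv, hτ] with ω ⟨l, hl⟩ hτω
    exact tendsto_rpow_neg_mul_norm_of_tendsto_sum hτω hm hl
  · intro hmom
    filter_upwards [ae_summable_rpow_neg_mul_norm hα hξm hξ hmom, hτ] with ω hω hτω
    exact ⟨_, (summable_rpow_neg_smul_of_tendsto_div hτω hm hω).hasSum.tendsto_sum_nat⟩

/-- **Example 2 of Section 4.** Let `α > 1`, let `τ_k` be the arrival times of a Poisson
process with intensity `λ` (partial sums of i.i.d. rate-`λ` exponentials `E_k`) and let
`(ξ_k)` be i.i.d. `ℝ^d`-valued random variables independent of `(E_k)`. Then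
`Σ_k τ_k^{−α} ξ_k` converges a.s. iff `E[‖ξ₁‖^{1/α}] < ∞`. -/
theorem power_shot_noise_series_converges_iff_moment
    {Ω : Type*} [MeasurableSpace Ω] (P : Measure Ω) [IsProbabilityMeasure P]
    {d : ℕ} (lam α : ℝ) (hlam : 0 < lam) (hα : 1 < α)
    (E : ℕ → Ω → ℝ) (ξ : ℕ → Ω → EuclideanSpace ℝ (Fin d))
    (hEm : ∀ k, Measurable (E k)) (hξm : ∀ k, Measurable (ξ k))
    (hindep : iIndepFun (m := jointMS d) (jointFam E ξ) P)
    (hE : ∀ k, Measure.map (E k) P = expMeasure lam)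
    (hξ : ∀ k, Measure.map (ξ k) P = Measure.map (ξ 0) P) :
    (∀ᵐ ω ∂P, ∃ l : EuclideanSpace ℝ (Fin d),
        Tendsto (fun n => ∑ k ∈ Finset.range n,
            ((∑ i ∈ Finset.range (k + 1), E i ω) ^ (-α)) • ξ k ω)
          atTop (nhds l)) ↔
      ∫⁻ ω, ENNReal.ofReal (‖ξ 0 ω‖ ^ (1 / α)) ∂P < ⊤ := by
  have hτ := ae_tendsto_sum_range_succ_div_of_map_eq_expMeasure hlam hEm
    (fun i j hij => (hindep.precomp Sum.inl_injective).indepFun hij) hE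
  have hξindep := hindep.precomp Sum.inr_injective
  exact ae_exists_tendsto_sum_rpow_neg_smul_iff hα (integral_id_expMeasure_pos hlam) hξm
    hξindep (fun k => ⟨(hξm k).aemeasurable, (hξm 0).aemeasurable, hξ k⟩) hτ
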